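/- Let G be a transitive permutation group on a finite set Q and let t ∈ ℕ. For each 0 ≤ n ≤ t, let Γ^n be the set of orbits of the diagonal action of G on Q^{n+2}. Then (Q, {Γ^n}_{0≤n≤t}) is a height t presuperscheme. Consequently, every Schurian association scheme is extensible to every height t ∈ ℕ. -/
import Mathlib


/-- The first factor tuple `(x_0, ..., x_m, z)` extracted from
`w = (x_0, ..., x_m, y_0, ..., y_n)`. -/
def fstTup {Q : Type} (m n : ℕ) (w : Fin (m + n + 2) → Q) (z : Q) :
    Fin (m + 2) → Q :=
  Fin.snoc (fun i : Fin (m + 1) => w (Fin.castLE (by omega) i)) z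

/-- The second factor tuple `(z, y_0, ..., y_n)` extracted from
`w = (x_0, ..., x_m, y_0, ..., y_n)`. -/
def sndTup {Q : Type} (m n : ℕ) (w : Fin (m + n + 2) → Q) (z : Q) :
    Fin (n + 2) → Q :=
  Fin.cons z (fun i : Fin (n + 1) => w ⟨m + 1 + i.1, by have := i.isLt; omega⟩)

/-- A height `t` presuperscheme on `Q`: a family of partitions `Γ n` of
`Q^(n+2)` (for `n ≤ t`) satisfying the identity (P1), projection (P2),
coordinate-permutation invariance (P3) and intersection (P4) properties. -/
structure PreScheme (Q : Type) [Fintype Q] (t : ℕ) where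
  Γ : ∀ n : ℕ, Set (Set (Fin (n + 2) → Q))
  nonempty : ∀ n ≤ t, ∀ C ∈ Γ n, C.Nonempty
  partition : ∀ n ≤ t, ∀ x : Fin (n + 2) → Q, ∃! C, C ∈ Γ n ∧ x ∈ C
  identity : {x : Fin 2 → Q | x 0 = x 1} ∈ Γ 0
  proj : ∀ n : ℕ, n + 1 ≤ t → ∀ C ∈ Γ (n + 1),
    {y : Fin (n + 2) → Q | ∃ x ∈ C, y = x ∘ Fin.castSucc} ∈ Γ n
  invariant : ∀ n ≤ t, ∀ C ∈ Γ n, ∀ τ : Equiv.Perm (Fin (n + 2)),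
    {x : Fin (n + 2) → Q | x ∘ τ ∈ C} ∈ Γ n
  inter : ∀ m n : ℕ, m + n ≤ t → ∀ Ci ∈ Γ m, ∀ Cj ∈ Γ n, ∀ Ck ∈ Γ (m + n),
    ∀ w ∈ Ck, ∀ w' ∈ Ck,
      {z : Q | fstTup m n w z ∈ Ci ∧ sndTup m n w z ∈ Cj}.ncard =
      {z : Q | fstTup m n w' z ∈ Ci ∧ sndTup m n w' z ∈ Cj}.ncard

/-- The relation on `Q × Q` viewed as a set of 2-tuples `Fin 2 → Q`. -/
def pairsToFun {Q : Type} (D : Set (Q × Q)) : Set (Fin 2 → Q) :=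
  {x | (x 0, x 1) ∈ D}

/-- An association scheme `(Q, Γ0)` is extensible to height `t` if it is
associated to some height `t` presuperscheme. -/
def Extensible (Q : Type) [Fintype Q] (Γ0 : Set (Set (Q × Q))) (t : ℕ) : Prop :=
  ∃ P : PreScheme Q t, P.Γ 0 = pairsToFun '' Γ0

/-- `Γ` is (the partition of) an association scheme on `Q`. -/
def IsAssocScheme (Q : Type) [Fintype Q] (Γ : Set (Set (Q × Q))) : Prop :=
  (∀ C ∈ Γ, C.Nonempty) ∧
  (∀ p : Q × Q, ∃! C, C ∈ Γ ∧ p ∈ C) ∧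
  {p : Q × Q | p.1 = p.2} ∈ Γ ∧
  (∀ C ∈ Γ, {p : Q × Q | (p.2, p.1) ∈ C} ∈ Γ) ∧
  (∀ Ci ∈ Γ, ∀ Cj ∈ Γ, ∀ Ck ∈ Γ, ∀ p ∈ Ck, ∀ q ∈ Ck,
    {z : Q | (p.1, z) ∈ Ci ∧ (z, p.2) ∈ Cj}.ncard =
    {z : Q | (q.1, z) ∈ Ci ∧ (z, q.2) ∈ Cj}.ncard)

section OrbAux
variable {Q : Type} (G : Subgroup (Equiv.Perm Q))

/-- The `G`-orbit of a tuple `x : Fin k → Q`. -/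
def orbSet (k : ℕ) (x : Fin k → Q) : Set (Fin k → Q) :=
  {y | ∃ g ∈ G, y = ⇑g ∘ x}

variable {G}

lemma mem_orbSet_self {k : ℕ} (x : Fin k → Q) : x ∈ orbSet G k x :=
  ⟨1, G.one_mem, by ext i; simp⟩

lemma comp_mem_orbSet_iff {k : ℕ} {g : Equiv.Perm Q} (hg : g ∈ G)
    {u x : Fin k → Q} : ⇑g ∘ u ∈ orbSet G k x ↔ u ∈ orbSet G k x := by
  constructor
  · rintro ⟨h, hh, he⟩
    refine ⟨g⁻¹ * h, G.mul_mem (G.inv_mem hg) hh, ?_⟩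
    have : u = ⇑g⁻¹ ∘ (⇑g ∘ u) := by ext i; simp
    rw [this, he]; ext i; simp [Equiv.Perm.mul_apply]
  · rintro ⟨h, hh, he⟩
    exact ⟨g * h, G.mul_mem hg hh, by rw [he]; ext i; simp [Equiv.Perm.mul_apply]⟩

lemma orbSet_eq_of_mem {k : ℕ} {x y : Fin k → Q} (h : y ∈ orbSet G k x) :
    orbSet G k y = orbSet G k x := by
  obtain ⟨g, hg, rfl⟩ := h
  ext u
  constructor
  · rintro ⟨h, hh, rfl⟩
    exact ⟨h * g, G.mul_mem hh hg, by ext i; simp [Equiv.Perm.mul_apply]⟩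
  · rintro ⟨h, hh, rfl⟩
    refine ⟨h * g⁻¹, G.mul_mem hh (G.inv_mem hg), ?_⟩
    ext i; simp [Equiv.Perm.mul_apply]

lemma fstTup_comp (m n : ℕ) (g : Q → Q) (w : Fin (m + n + 2) → Q) (z : Q) :
    fstTup m n (g ∘ w) (g z) = g ∘ fstTup m n w z := by
  unfold fstTup
  rw [Fin.comp_snoc]
  rfl

lemma sndTup_comp (m n : ℕ) (g : Q → Q) (w : Fin (m + n + 2) → Q) (z : Q) :
    sndTup m n (g ∘ w) (g z) = g ∘ sndTup m n w z := by
  unfold sndTup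
  rw [Fin.comp_cons]
  rfl

lemma key_inter {m n : ℕ} {g : Equiv.Perm Q} (hg : g ∈ G)
    (xi : Fin (m + 2) → Q) (xj : Fin (n + 2) → Q) (w : Fin (m + n + 2) → Q) :
    {z : Q | fstTup m n (⇑g ∘ w) z ∈ orbSet G (m + 2) xi ∧
        sndTup m n (⇑g ∘ w) z ∈ orbSet G (n + 2) xj} =
    ⇑g '' {z : Q | fstTup m n w z ∈ orbSet G (m + 2) xi ∧
        sndTup m n w z ∈ orbSet G (n + 2) xj} := by
  ext z'
  simp only [Set.mem_image, Set.mem_setOf_eq]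
  constructor
  · rintro ⟨h1, h2⟩
    refine ⟨g⁻¹ z', ⟨?_, ?_⟩, by simp⟩
    · rw [show z' = g (g⁻¹ z') by simp, fstTup_comp] at h1
      exact (comp_mem_orbSet_iff hg).1 h1
    · rw [show z' = g (g⁻¹ z') by simp, sndTup_comp] at h2
      exact (comp_mem_orbSet_iff hg).1 h2
  · rintro ⟨z, ⟨h1, h2⟩, rfl⟩
    rw [fstTup_comp, sndTup_comp]
    exact ⟨(comp_mem_orbSet_iff hg).2 h1, (comp_mem_orbSet_iff hg).2 h2⟩

lemma pairsToFun_orb (p : Q × Q) :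
    pairsToFun {q | ∃ g ∈ G, q = (g p.1, g p.2)} = orbSet G 2 ![p.1, p.2] := by
  ext y
  simp only [pairsToFun, orbSet, Set.mem_setOf_eq, Prod.mk.injEq]
  constructor
  · rintro ⟨g, hg, h1, h2⟩
    refine ⟨g, hg, ?_⟩
    ext i; fin_cases i <;> simp [h1, h2]
  · rintro ⟨g, hg, rfl⟩
    exact ⟨g, hg, by simp, by simp⟩

variable [Fintype Q] [Nonempty Q]

/-- The orbit presuperscheme of a transitive permutation group. -/
def orbScheme (G : Subgroup (Equiv.Perm Q))
    (htrans : ∀ x y : Q, ∃ g ∈ G, g x = y) (t : ℕ) : PreScheme Q t where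
  Γ := fun n => {C | ∃ x : Fin (n + 2) → Q, C = orbSet G (n + 2) x}
  nonempty := by
    rintro n - C ⟨x, rfl⟩
    exact ⟨x, mem_orbSet_self x⟩
  partition := by
    rintro n - x
    refine ⟨orbSet G (n + 2) x, ⟨⟨x, rfl⟩, mem_orbSet_self x⟩, ?_⟩
    rintro C ⟨⟨x', rfl⟩, hx⟩
    exact (orbSet_eq_of_mem hx).symm
  identity := by
    obtain ⟨a0⟩ := (inferInstance : Nonempty Q)
    refine ⟨fun _ => a0, ?_⟩
    ext y
    simp only [Set.mem_setOf_eq, orbSet]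
    constructor
    · intro h
      obtain ⟨g, hg, hga⟩ := htrans a0 (y 0)
      refine ⟨g, hg, ?_⟩
      ext i
      fin_cases i
      · simpa using hga.symm
      · simpa [h] using (h ▸ hga).symm
    · rintro ⟨g, hg, rfl⟩
      simp [Function.comp]
  proj := by
    rintro n - C ⟨x, rfl⟩
    refine ⟨x ∘ Fin.castSucc, ?_⟩
    ext y
    simp only [Set.mem_setOf_eq, orbSet]
    constructor
    · rintro ⟨u, ⟨g, hg, rfl⟩, rfl⟩
      exact ⟨g, hg, rfl⟩
    · rintro ⟨g, hg, rfl⟩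
      exact ⟨⇑g ∘ x, ⟨g, hg, rfl⟩, rfl⟩
  invariant := by
    rintro n - C ⟨x, rfl⟩ τ
    refine ⟨x ∘ ⇑τ⁻¹, ?_⟩
    ext y
    simp only [Set.mem_setOf_eq, orbSet]
    constructor
    · rintro ⟨g, hg, he⟩
      refine ⟨g, hg, ?_⟩
      ext i
      have := congrFun he (τ⁻¹ i)
      simpa using this
    · rintro ⟨g, hg, rfl⟩
      exact ⟨g, hg, by ext i; simp⟩
  inter := by
    rintro m n - Ci ⟨xi, rfl⟩ Cj ⟨xj, rfl⟩ Ck ⟨xk, rfl⟩ w hw w' hw'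
    obtain ⟨a, ha, rfl⟩ := hw
    obtain ⟨b, hb, rfl⟩ := hw'
    have hg : b * a⁻¹ ∈ G := G.mul_mem hb (G.inv_mem ha)
    have e1 : ⇑b ∘ xk = ⇑(b * a⁻¹) ∘ (⇑a ∘ xk) := by
      ext i; simp [Equiv.Perm.mul_apply]
    rw [e1, key_inter hg xi xj (⇑a ∘ xk),
      Set.ncard_image_of_injective _ (b * a⁻¹).injective]

end OrbAux

/-- the orbit partitions of the diagonal action of a transitive
permutation group `G` on the powers `Q^(n+2)` form a height `t` presuperscheme;
consequently every Schurian association scheme is extensible to every height. -/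
theorem stmt_10 {Q : Type} [Fintype Q] [Nonempty Q]
    (G : Subgroup (Equiv.Perm Q))
    (htrans : ∀ x y : Q, ∃ g ∈ G, g x = y) (t : ℕ) :
    (∃ P : PreScheme Q t, ∀ n : ℕ,
      P.Γ n = {C | ∃ x : Fin (n + 2) → Q,
        C = {y | ∃ g ∈ G, y = ⇑g ∘ x}}) ∧
    Extensible Q
      {C | ∃ p : Q × Q, C = {q | ∃ g ∈ G, q = (g p.1, g p.2)}} t := by
  refine ⟨⟨orbScheme G htrans t, fun n => rfl⟩, orbScheme G htrans t, ?_⟩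
  show {C | ∃ x : Fin 2 → Q, C = orbSet G 2 x} = _
  ext C
  simp only [Set.mem_setOf_eq, Set.mem_image]
  constructor
  · rintro ⟨x, rfl⟩
    refine ⟨{q | ∃ g ∈ G, q = (g (x 0), g (x 1))}, ⟨(x 0, x 1), rfl⟩, ?_⟩
    rw [pairsToFun_orb ((x 0, x 1) : Q × Q)]
    have hx : ![x 0, x 1] = x := by
      ext i; fin_cases i <;> simp
    rw [hx]
  · rintro ⟨D, ⟨p, rfl⟩, rfl⟩
    exact ⟨![p.1, p.2], pairsToFun_orb p⟩
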